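/- arXiv:1411.3233 — 4 statements merged into one kernel-verified Lean document; each statement's English description precedes it below -/
import Mathlib

section
/- In the completion M̂ of M consisting of all formal A-linear combinations of the basis elements a_z (z ∈ I_*), for every y ∈ W one has T_y(Σ_{z∈I_*} a_z) = u^{2l(y)} Σ_{z∈I_*} a_z. -/
open LaurentPolynomial

/-- Let `M̂` be the space of all formal `A`-linear combinations of the basis
elements `a_z` (`z` a twisted involution), i.e. all functions `{z // st z = z⁻¹} → ℤ[u,u⁻¹]`,
with the `H`-action extending the Lusztig–Vogan formulas 1.1(i)–(iv) (the operator `T_s` acts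
on a formal combination coordinatewise by the transposed coefficients of 1.1).  Then for every
`y ∈ W` one has `T_y (Σ_z a_z) = u^{2 l(y)} Σ_z a_z`, where `Σ_z a_z` is the constant
function `1`. -/
theorem statement4 {B W : Type} [Group W] {M : CoxeterMatrix B}
    (cs : CoxeterSystem M W) (st : W ≃* W)
    (hst_inv : ∀ w, st (st w) = w)
    (hst_S : ∀ i : B, ∃ j : B, st (cs.simple i) = cs.simple j)
    (act : W → (({w : W // st w = w⁻¹} → LaurentPolynomial ℤ) →ₗ[LaurentPolynomial ℤ]
      ({w : W // st w = w⁻¹} → LaurentPolynomial ℤ)))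
    (hact1 : act 1 = LinearMap.id)
    (hactmul : ∀ w w' : W, cs.length (w * w') = cs.length w + cs.length w' →
      act (w * w') = (act w) ∘ₗ (act w'))
    (hacts : ∀ (i : B) (m : {w : W // st w = w⁻¹} → LaurentPolynomial ℤ)
      (z : {w : W // st w = w⁻¹}),
      (cs.simple i * z.1 = z.1 * st (cs.simple i) →
        cs.length z.1 < cs.length (cs.simple i * z.1) →
        ∀ h : st (cs.simple i * z.1) = (cs.simple i * z.1)⁻¹,
          act (cs.simple i) m z =
            (T 1 : LaurentPolynomial ℤ) * m z + (T 1 ^ 2 - T 1) * m ⟨cs.simple i * z.1, h⟩) ∧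
      (cs.simple i * z.1 = z.1 * st (cs.simple i) →
        cs.length (cs.simple i * z.1) < cs.length z.1 →
        ∀ h : st (cs.simple i * z.1) = (cs.simple i * z.1)⁻¹,
          act (cs.simple i) m z =
            (T 1 ^ 2 - T 1 - 1 : LaurentPolynomial ℤ) * m z +
              (T 1 + 1) * m ⟨cs.simple i * z.1, h⟩) ∧
      (cs.simple i * z.1 ≠ z.1 * st (cs.simple i) →
        cs.length z.1 < cs.length (cs.simple i * z.1) →
        ∀ h : st (cs.simple i * z.1 * st (cs.simple i)) =
            (cs.simple i * z.1 * st (cs.simple i))⁻¹,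
          act (cs.simple i) m z =
            (T 1 ^ 2 : LaurentPolynomial ℤ) * m ⟨cs.simple i * z.1 * st (cs.simple i), h⟩) ∧
      (cs.simple i * z.1 ≠ z.1 * st (cs.simple i) →
        cs.length (cs.simple i * z.1) < cs.length z.1 →
        ∀ h : st (cs.simple i * z.1 * st (cs.simple i)) =
            (cs.simple i * z.1 * st (cs.simple i))⁻¹,
          act (cs.simple i) m z =
            (T 1 ^ 2 - 1 : LaurentPolynomial ℤ) * m z +
              m ⟨cs.simple i * z.1 * st (cs.simple i), h⟩)) :
    ∀ y : W, act y (fun _ => 1) =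
      fun _ => (T 1 : LaurentPolynomial ℤ) ^ (2 * cs.length y) := by
  -- key lemma: action of a simple reflection on the constant function 1
  have key : ∀ i : B, act (cs.simple i) (fun _ => 1) =
      fun _ => (T 1 : LaurentPolynomial ℤ) ^ 2 := by
    intro i
    funext z
    obtain ⟨h1, h2, h3, h4⟩ := hacts i (fun _ => 1) z
    obtain ⟨j, hj⟩ := hst_S i
    have hts : st (cs.simple i) * st (cs.simple i) = 1 := by
      rw [hj]; exact cs.simple_mul_simple_self j
    have hti : (st (cs.simple i))⁻¹ = st (cs.simple i) :=
      (eq_inv_of_mul_eq_one_right hts).symm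
    have hz := z.2
    by_cases hc : cs.simple i * z.1 = z.1 * st (cs.simple i)
    · have h : st (cs.simple i * z.1) = (cs.simple i * z.1)⁻¹ := by
        rw [map_mul, hz, mul_inv_rev, cs.inv_simple]
        have : st (cs.simple i) = z.1⁻¹ * (cs.simple i) * z.1 := by
          rw [mul_assoc, hc, ← mul_assoc, inv_mul_cancel, one_mul]
        rw [this]; group
      rcases cs.length_simple_mul z.1 i with hl | hl
      · have := h1 hc (by omega) h
        simp only [this]; ring
      · have := h2 hc (by omega) h
        simp only [this]; ring
    · have h : st (cs.simple i * z.1 * st (cs.simple i)) =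
          (cs.simple i * z.1 * st (cs.simple i))⁻¹ := by
        rw [map_mul, map_mul, hz, hst_inv, mul_inv_rev, mul_inv_rev, hti, cs.inv_simple]; group
      rcases cs.length_simple_mul z.1 i with hl | hl
      · have := h3 hc (by omega) h
        simp only [this]; ring
      · have := h4 hc (by omega) h
        simp only [this]; ring
  have main : ∀ n : ℕ, ∀ y : W, cs.length y = n →
      act y (fun _ => 1) = fun _ => (T 1 : LaurentPolynomial ℤ) ^ (2 * n) := by
    intro n
    induction n using Nat.strong_induction_on with
    | _ n ih =>
      intro y hy
      rcases eq_or_ne y 1 with rfl | hne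
      · rw [cs.length_one] at hy
        subst hy
        rw [hact1]
        simp
      · obtain ⟨i, hi⟩ := cs.exists_leftDescent_of_ne_one hne
        have h1 : cs.length (cs.simple i * y) + 1 = cs.length y :=
          (cs.isLeftDescent_iff).mp hi
        have hadd : cs.length (cs.simple i * (cs.simple i * y)) =
            cs.length (cs.simple i) + cs.length (cs.simple i * y) := by
          rw [← mul_assoc, cs.simple_mul_simple_self, one_mul, cs.length_simple]
          omega
        have heq : y = cs.simple i * (cs.simple i * y) := by
          rw [← mul_assoc, cs.simple_mul_simple_self, one_mul]
        have hml : cs.length (cs.simple i * y) = n - 1 := by omega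
        have hprev := ih (n - 1) (by omega) (cs.simple i * y) hml
        rw [heq, hactmul _ _ hadd, LinearMap.comp_apply, hprev]
        have hsmul : (fun _ : {w : W // st w = w⁻¹} =>
            (T 1 : LaurentPolynomial ℤ) ^ (2 * (n - 1))) =
            ((T 1 : LaurentPolynomial ℤ) ^ (2 * (n - 1))) •
              (fun _ : {w : W // st w = w⁻¹} => (1 : LaurentPolynomial ℤ)) := by
          funext w; simp
        rw [hsmul, map_smul, key i]
        funext w
        have hn1 : 1 ≤ n := by omega
        simp only [Pi.smul_apply, smul_eq_mul, ← pow_add]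
        congr 1
        omega
  intro y
  exact main (cs.length y) y rfl
end

section
/- For the polynomials X^z_y of Proposition 1.2, one has X^z_y = ξ(T_y a_z), where ξ : M → ℤ[u,u⁻¹] is the A-linear functional with ξ(a_z) = δ_{z,1} and M is the Lusztig–Vogan module. -/
open Polynomial LaurentPolynomial
open scoped Classical

/-- The characterization (Proposition 1.2) of the polynomials `X^z_y ∈ ℤ[u]`, indexed by pairs
`(z, y)` with `z` a twisted involution (`st z = z⁻¹`) and `y ∈ W`: `X^z_1 = δ_{z,1}`, and for
`s ∈ S`, `y > ys`, the recursions 1.2(i)–(iv) hold. -/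
def XRec {B W : Type} [Group W] {M : CoxeterMatrix B} (cs : CoxeterSystem M W)
    (st : W ≃* W) (P : {z : W // st z = z⁻¹} → W → Polynomial ℤ) : Prop :=
  (∀ z : {z : W // st z = z⁻¹}, P z 1 = if z.1 = 1 then 1 else 0) ∧
  ∀ (i : B) (y : W), cs.length (y * cs.simple i) < cs.length y →
    ∀ z : {z : W // st z = z⁻¹},
      (cs.simple i * z.1 = z.1 * st (cs.simple i) →
        cs.length z.1 < cs.length (cs.simple i * z.1) →
        ∀ h : st (cs.simple i * z.1) = (cs.simple i * z.1)⁻¹,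
          P z y = X * P z (y * cs.simple i) +
            (X + 1) * P ⟨cs.simple i * z.1, h⟩ (y * cs.simple i)) ∧
      (cs.simple i * z.1 = z.1 * st (cs.simple i) →
        cs.length (cs.simple i * z.1) < cs.length z.1 →
        ∀ h : st (cs.simple i * z.1) = (cs.simple i * z.1)⁻¹,
          P z y = (X ^ 2 - X - 1) * P z (y * cs.simple i) +
            (X ^ 2 - X) * P ⟨cs.simple i * z.1, h⟩ (y * cs.simple i)) ∧
      (cs.simple i * z.1 ≠ z.1 * st (cs.simple i) →
        cs.length z.1 < cs.length (cs.simple i * z.1) →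
        ∀ h : st (cs.simple i * z.1 * st (cs.simple i)) =
            (cs.simple i * z.1 * st (cs.simple i))⁻¹,
          P z y = P ⟨cs.simple i * z.1 * st (cs.simple i), h⟩ (y * cs.simple i)) ∧
      (cs.simple i * z.1 ≠ z.1 * st (cs.simple i) →
        cs.length (cs.simple i * z.1) < cs.length z.1 →
        ∀ h : st (cs.simple i * z.1 * st (cs.simple i)) =
            (cs.simple i * z.1 * st (cs.simple i))⁻¹,
          P z y = (X ^ 2 - 1) * P z (y * cs.simple i) +
            X ^ 2 * P ⟨cs.simple i * z.1 * st (cs.simple i), h⟩ (y * cs.simple i))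

/-- The Lusztig–Vogan formulas 1.1(i)–(iv) for the action of the generators `T_s` of the
Iwahori–Hecke algebra (with parameter `u²`) on the free `ℤ[u,u⁻¹]`-module with basis
`a_z` indexed by the twisted involutions `z` (`st z = z⁻¹`). -/
def LVFormulas {B W : Type} [Group W] {M : CoxeterMatrix B} (cs : CoxeterSystem M W)
    (st : W ≃* W) {Mo : Type} [AddCommGroup Mo] [Module (LaurentPolynomial ℤ) Mo]
    (a : {w : W // st w = w⁻¹} → Mo)
    (Ts : B → Mo →ₗ[LaurentPolynomial ℤ] Mo) : Prop :=
  ∀ (i : B) (z : {w : W // st w = w⁻¹}),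
    (cs.simple i * z.1 = z.1 * st (cs.simple i) →
      cs.length z.1 < cs.length (cs.simple i * z.1) →
      ∀ h : st (cs.simple i * z.1) = (cs.simple i * z.1)⁻¹,
        Ts i (a z) = (T 1 : LaurentPolynomial ℤ) • a z + ((T 1 + 1 : LaurentPolynomial ℤ)) • a ⟨cs.simple i * z.1, h⟩) ∧
    (cs.simple i * z.1 = z.1 * st (cs.simple i) →
      cs.length (cs.simple i * z.1) < cs.length z.1 →
      ∀ h : st (cs.simple i * z.1) = (cs.simple i * z.1)⁻¹,
        Ts i (a z) = ((T 1 ^ 2 - T 1 - 1 : LaurentPolynomial ℤ)) • a z + ((T 1 ^ 2 - T 1 : LaurentPolynomial ℤ)) • a ⟨cs.simple i * z.1, h⟩) ∧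
    (cs.simple i * z.1 ≠ z.1 * st (cs.simple i) →
      cs.length z.1 < cs.length (cs.simple i * z.1) →
      ∀ h : st (cs.simple i * z.1 * st (cs.simple i)) =
          (cs.simple i * z.1 * st (cs.simple i))⁻¹,
        Ts i (a z) = a ⟨cs.simple i * z.1 * st (cs.simple i), h⟩) ∧
    (cs.simple i * z.1 ≠ z.1 * st (cs.simple i) →
      cs.length (cs.simple i * z.1) < cs.length z.1 →
      ∀ h : st (cs.simple i * z.1 * st (cs.simple i)) =
          (cs.simple i * z.1 * st (cs.simple i))⁻¹,
        Ts i (a z) = ((T 1 ^ 2 - 1 : LaurentPolynomial ℤ)) • a z + ((T 1 ^ 2 : LaurentPolynomial ℤ)) • a ⟨cs.simple i * z.1 * st (cs.simple i), h⟩)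

/-! Both sides are computed by induction on `ℓ(y)`. At `y = 1` they agree by the
normalisations `X^z_1 = δ_{z,1}` and `ξ(a_z) = δ_{z,1}`. If `ys < y` then `T_y = T_{ys} T_s`, so
expanding `T_s a_z` by the Lusztig–Vogan formulas 1.1(i)–(iv) and applying `ξ ∘ T_{ys}` turns
`ξ(T_y a_z)` into exactly the combination of values at `ys` that the recursions 1.2(i)–(iv)
prescribe for `X^z_y`, with `u` mapped to `T 1`. -/

section TwistedInvolution

variable {W F : Type*} [Group W] [FunLike F W W] [MonoidHomClass F W W] (st : F) {s z : W}

theorem map_mul_eq_inv_of_mul_eq_mul_map (hs : s⁻¹ = s) (hz : st z = z⁻¹)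
    (hsz : s * z = z * st s) :
    st (s * z) = (s * z)⁻¹ := by
  have hs' : st s = z⁻¹ * (s * z) := by rw [hsz, ← mul_assoc, inv_mul_cancel, one_mul]
  simp only [map_mul, hs', hz, mul_assoc, mul_inv_cancel, mul_one, mul_inv_rev, hs]

theorem map_mul_mul_map_eq_inv (hst : ∀ w, st (st w) = w) (hs : s⁻¹ = s) (hz : st z = z⁻¹) :
    st (s * z * st s) = (s * z * st s)⁻¹ := by
  have hst_s : (st s)⁻¹ = st s := by rw [← map_inv, hs]
  simp only [map_mul, hst, hz, mul_inv_rev, hs, hst_s, mul_assoc]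

end TwistedInvolution

section LusztigVogan

variable {B W : Type} [Group W] {M : CoxeterMatrix B} {cs : CoxeterSystem M W} {st : W ≃* W}
  {P : {z : W // st z = z⁻¹} → W → Polynomial ℤ}
  {Mo : Type} [AddCommGroup Mo] [Module (LaurentPolynomial ℤ) Mo] {a : {w : W // st w = w⁻¹} → Mo}
  {Tact : W → (Mo →ₗ[LaurentPolynomial ℤ] Mo)} {ξ : Mo →ₗ[LaurentPolynomial ℤ] LaurentPolynomial ℤ}

theorem toLaurent_eq_of_rightDescent (hst : ∀ w, st (st w) = w) (hP : XRec cs st P)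
    (hTactmul : ∀ w w' : W, cs.length (w * w') = cs.length w + cs.length w' →
      Tact (w * w') = (Tact w) ∘ₗ (Tact w'))
    (hTacts : LVFormulas cs st a (fun i => Tact (cs.simple i)))
    {y : W} {i : B} (hi : cs.IsRightDescent y i)
    (ih : ∀ z, toLaurent (P z (y * cs.simple i)) = ξ (Tact (y * cs.simple i) (a z)))
    (z : {w : W // st w = w⁻¹}) :
    toLaurent (P z y) = ξ (Tact y (a z)) := by
  have hTact : Tact y = Tact (y * cs.simple i) ∘ₗ Tact (cs.simple i) := by
    conv_lhs => rw [← cs.simple_mul_simple_cancel_right (w := y) (i := i)]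
    refine hTactmul _ _ ?_
    rw [cs.simple_mul_simple_cancel_right, cs.length_simple, cs.isRightDescent_iff.mp hi]
  have hξ_smul (c : LaurentPolynomial ℤ) (m : Mo) :
      ξ (Tact (y * cs.simple i) (c • m)) = c * ξ (Tact (y * cs.simple i) m) := by
    rw [map_smul, map_smul, smul_eq_mul]
  obtain ⟨hT₁, hT₂, hT₃, hT₄⟩ := hTacts i z
  obtain ⟨hX₁, hX₂, hX₃, hX₄⟩ := hP.2 i y hi z
  rw [hTact, LinearMap.comp_apply]
  by_cases hsz : cs.simple i * z.1 = z.1 * st (cs.simple i)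
  · have hsz' := map_mul_eq_inv_of_mul_eq_mul_map st (cs.inv_simple i) z.2 hsz
    rcases cs.length_simple_mul z.1 i with hl | hl
    · rw [hX₁ hsz (by omega) hsz', hT₁ hsz (by omega) hsz']
      simp only [map_add, hξ_smul, map_mul, toLaurent_X, toLaurent_one, ih]
    · rw [hX₂ hsz (by omega) hsz', hT₂ hsz (by omega) hsz']
      simp only [map_add, hξ_smul, map_sub, map_mul, map_pow, toLaurent_X, toLaurent_one, ih]
  · have hszs := map_mul_mul_map_eq_inv st hst (cs.inv_simple i) z.2
    rcases cs.length_simple_mul z.1 i with hl | hl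
    · rw [hX₃ hsz (by omega) hszs, hT₃ hsz (by omega) hszs, ih]
    · rw [hX₄ hsz (by omega) hszs, hT₄ hsz (by omega) hszs]
      simp only [map_add, hξ_smul, map_sub, map_mul, map_pow, toLaurent_X, toLaurent_one, ih]

end LusztigVogan

theorem statement6_general {B W : Type} [Group W] {M : CoxeterMatrix B}
    (cs : CoxeterSystem M W) (st : W ≃* W)
    (hst_inv : ∀ w, st (st w) = w)
    (P : {z : W // st z = z⁻¹} → W → Polynomial ℤ) (hP : XRec cs st P)
    (Mo : Type) [AddCommGroup Mo] [Module (LaurentPolynomial ℤ) Mo]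
    (a : Module.Basis {w : W // st w = w⁻¹} (LaurentPolynomial ℤ) Mo)
    (Tact : W → (Mo →ₗ[LaurentPolynomial ℤ] Mo))
    (hTact1 : Tact 1 = LinearMap.id)
    (hTactmul : ∀ w w' : W, cs.length (w * w') = cs.length w + cs.length w' →
      Tact (w * w') = (Tact w) ∘ₗ (Tact w'))
    (hTacts : LVFormulas cs st a (fun i => Tact (cs.simple i)))
    (ξ : Mo →ₗ[LaurentPolynomial ℤ] LaurentPolynomial ℤ)
    (hξ : ∀ z : {w : W // st w = w⁻¹}, ξ (a z) = if z.1 = 1 then 1 else 0) :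
    ∀ (z : {w : W // st w = w⁻¹}) (y : W),
      Polynomial.toLaurent (P z y) = ξ (Tact y (a z)) := by
  intro z y
  induction hn : cs.length y using Nat.strong_induction_on generalizing y z with
  | _ n ih =>
    rcases eq_or_ne y 1 with rfl | hy
    · rw [hP.1, hTact1, LinearMap.id_apply, hξ]
      split_ifs <;> simp
    · obtain ⟨i, hi⟩ := cs.exists_rightDescent_of_ne_one hy
      exact toLaurent_eq_of_rightDescent hst_inv hP hTactmul hTacts hi
        (fun z' => ih _ (hn ▸ hi) z' _ rfl) z

/-- The polynomials `X^z_y` of Proposition 1.2 satisfy `X^z_y = ξ(T_y a_z)`,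
where `ξ` is the `A`-linear functional on the Lusztig–Vogan module with `ξ(a_z) = δ_{z,1}`. -/
theorem statement6 {B W : Type} [Group W] [Finite B] {M : CoxeterMatrix B}
    (cs : CoxeterSystem M W) (st : W ≃* W)
    (hst_inv : ∀ w, st (st w) = w)
    (hst_S : ∀ i : B, ∃ j : B, st (cs.simple i) = cs.simple j)
    (P : {z : W // st z = z⁻¹} → W → Polynomial ℤ) (hP : XRec cs st P)
    (Mo : Type) [AddCommGroup Mo] [Module (LaurentPolynomial ℤ) Mo]
    (a : Module.Basis {w : W // st w = w⁻¹} (LaurentPolynomial ℤ) Mo)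
    (Tact : W → (Mo →ₗ[LaurentPolynomial ℤ] Mo))
    (hTact1 : Tact 1 = LinearMap.id)
    (hTactmul : ∀ w w' : W, cs.length (w * w') = cs.length w + cs.length w' →
      Tact (w * w') = (Tact w) ∘ₗ (Tact w'))
    (hTacts : LVFormulas cs st a (fun i => Tact (cs.simple i)))
    (ξ : Mo →ₗ[LaurentPolynomial ℤ] LaurentPolynomial ℤ)
    (hξ : ∀ z : {w : W // st w = w⁻¹}, ξ (a z) = if z.1 = 1 then 1 else 0) :
    ∀ (z : {w : W // st w = w⁻¹}) (y : W),
      Polynomial.toLaurent (P z y) = ξ (Tact y (a z)) :=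
  statement6_general cs st hst_inv P hP Mo a Tact hTact1 hTactmul hTacts ξ hξ
end

section
/- For any y ∈ W, Σ_{z ∈ I_*} X^z_y = u^{2l(y)}, where the sum has only finitely many nonzero terms (indeed X^z_y = 0 whenever l(z) > 2l(y)). -/
/-!
Fix a right descent `s` of `y ≠ 1`. The recursions 1.2 say
`X^z_y = α_z X^z_{ys} + β_z X^{s⋉z}_{ys}`, where `z ↦ s ⋉ z` is an involution of `I_*`.
Reindexing the second sum along this involution gives `Σ_z X^z_y = Σ_z (α_z + β_{s⋉z}) X^z_{ys}`,
and `α_z + β_{s⋉z} = u²` for every `z`, so the sum gains a factor `u²` at each step. Since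
`l(s⋉z) ≥ l(z) - 2`, the same recursion propagates both finiteness of the support and the
vanishing for `l(z) > 2 l(y)`.

The identity `α_z + β_{s⋉z} = u²` rests on `l(s z s*) = l(z) ± 2` whenever `s z ≠ z s*`, an
instance of the lifting property. That in turn follows from the exchange condition, which comes
from the Björner–Brenti sign representation: the parity of the number of occurrences of a
reflection in the right inversion sequence of a word only depends on the product of the word.
-/

open Polynomial
open scoped Classical

namespace CoxeterSystem

open List

variable {B W : Type*} [Group W] {M : CoxeterMatrix B} (cs : CoxeterSystem M W)

local prefix:100 "s" => cs.simple
local prefix:100 "π" => cs.wordProd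
local prefix:100 "ℓ" => cs.length
local prefix:100 "ris " => cs.rightInvSeq
local prefix:100 "lis " => cs.leftInvSeq

theorem reverse_alternatingWord (i j : B) (n : ℕ) :
    (alternatingWord i j n).reverse =
      if Even n then alternatingWord j i n else alternatingWord i j n := by
  induction n generalizing i j with
  | zero => simp [alternatingWord]
  | succ n ih =>
    conv_lhs => rw [alternatingWord_succ, concat_eq_append, reverse_append, ih]
    by_cases hn : Even n
    · rw [if_pos hn, if_neg (by simpa [Nat.even_add_one] using hn), alternatingWord_succ',
        if_pos hn]
      rfl
    · rw [if_neg hn, if_pos (by simpa [Nat.even_add_one] using hn), alternatingWord_succ',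
        if_neg hn]
      rfl

theorem prod_map_alternatingWord_two_mul {G : Type*} [Monoid G] (f : B → G) (i j : B) (m : ℕ) :
    ((alternatingWord i j (2 * m)).map f).prod = (f i * f j) ^ m := by
  induction m with
  | zero => simp [alternatingWord]
  | succ m ih =>
    rw [mul_add, mul_one, alternatingWord_succ', alternatingWord_succ', pow_succ', ← ih]
    simp [mul_assoc]

theorem count_rightInvSeq_alternatingWord_even (i j : B) (t : W) :
    Even ((ris (alternatingWord i j (2 * M i j))).count t) := by
  set m := M i j
  have hlis : lis (alternatingWord j i (2 * m)) =
      (range (2 * m)).map fun k => s j * (s i * s j) ^ k := by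
    refine ext_getElem (by simp) fun k hk _ => ?_
    rw [getElem_leftInvSeq_alternatingWord cs j i m k (by simpa using hk),
      prod_alternatingWord_eq_mul_pow]
    simp [Nat.mul_add_div]
  have hperiod : ∀ k, s j * (s i * s j) ^ (m + k) = s j * (s i * s j) ^ k := by
    intro k; rw [pow_add, cs.simple_mul_simple_pow, one_mul]
  have hrev : alternatingWord i j (2 * m) = (alternatingWord j i (2 * m)).reverse := by
    simp [reverse_alternatingWord]
  rw [hrev, rightInvSeq_reverse, count_reverse, hlis, two_mul, range_add, map_append, map_map]
  simp only [Function.comp_def, hperiod, count_append]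
  exact ⟨_, rfl⟩

/-- Björner–Brenti's `η_i`; its braid relations are what the exchange condition rests on. -/
noncomputable def signPerm (i : B) : Equiv.Perm (W × ℤˣ) :=
  Function.Involutive.toPerm (fun p => (s i * p.1 * s i, if p.1 = s i then -p.2 else p.2)) <| by
    rintro ⟨t, ε⟩
    have hconj : s i * t * s i = s i ↔ t = s i := by
      rw [mul_assoc, mul_eq_left, mul_eq_one_iff_eq_inv, inv_simple]
    simp only [Prod.mk.injEq, hconj]
    refine ⟨by simp [mul_assoc, cs.simple_mul_simple_cancel_left], by split_ifs <;> simp⟩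

theorem signPerm_apply (i : B) (p : W × ℤˣ) :
    cs.signPerm i p = (s i * p.1 * s i, if p.1 = s i then -p.2 else p.2) :=
  rfl

theorem prod_map_signPerm_apply (ω : List B) (t : W) (ε : ℤˣ) :
    (ω.map cs.signPerm).prod (t, ε) =
      (π ω * t * (π ω)⁻¹, (-1) ^ (ris ω).count t * ε) := by
  induction ω generalizing t ε with
  | nil => simp
  | cons i ω ih =>
    have hcond : π ω * t * (π ω)⁻¹ = s i ↔ (π ω)⁻¹ * s i * π ω = t :=
      ⟨fun h => by rw [← h]; group, fun h => by rw [← h]; group⟩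
    rw [map_cons, prod_cons, Equiv.Perm.mul_apply, ih, signPerm_apply, rightInvSeq, count_cons,
      wordProd_cons, Prod.mk.injEq]
    refine ⟨by simp [mul_assoc], ?_⟩
    simp only [hcond, beq_iff_eq]
    split_ifs <;> simp [pow_succ]

theorem isLiftable_signPerm : M.IsLiftable cs.signPerm := by
  intro i j
  rw [← prod_map_alternatingWord_two_mul]
  ext ⟨t, ε⟩ : 1
  obtain ⟨c, hc⟩ := cs.count_rightInvSeq_alternatingWord_even i j t
  rw [prod_map_signPerm_apply, hc, ← two_mul, pow_mul, prod_alternatingWord_eq_mul_pow]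
  simp

noncomputable def signRep : W →* Equiv.Perm (W × ℤˣ) :=
  cs.lift ⟨cs.signPerm, cs.isLiftable_signPerm⟩

theorem signRep_wordProd (ω : List B) : cs.signRep (π ω) = (ω.map cs.signPerm).prod := by
  rw [wordProd, map_list_prod, map_map]
  congr 2
  ext1 i
  exact cs.lift_apply_simple cs.isLiftable_signPerm i

theorem neg_one_pow_count_rightInvSeq_eq {ω ω' : List B} (h : π ω = π ω') (t : W) :
    (-1 : ℤˣ) ^ (ris ω).count t = (-1) ^ (ris ω').count t := by
  have := congrArg (fun g : Equiv.Perm (W × ℤˣ) => (g (t, 1)).2)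
    ((cs.signRep_wordProd ω).symm.trans ((congrArg cs.signRep h).trans (cs.signRep_wordProd ω')))
  simpa [prod_map_signPerm_apply] using this

theorem simple_mem_rightInvSeq_of_length_mul_simple_lt {ω : List B} {i : B}
    (h : ℓ (π ω * s i) < ℓ (π ω)) : s i ∈ ris ω := by
  -- `s i` occurs exactly once in `ris (ρ.concat i)` for a reduced word `ρ` of `π ω * s i`
  obtain ⟨ρ, hρ, hρω⟩ := cs.exists_isReduced (π ω * s i)
  have hnot : s i ∉ ris ρ := fun hmem => by
    have := (cs.isRightInversion_of_mem_rightInvSeq hρ hmem).2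
    rw [← hρω, cs.simple_mul_simple_cancel_right] at this
    omega
  have hnot' : s i ∉ (ris ρ).map (MulAut.conj (s i)) := by
    rw [mem_map]
    rintro ⟨t, ht, hts⟩
    have hfix : MulAut.conj (s i) (s i) = s i := by simp
    exact hnot ((MulAut.conj (s i)).injective (hts.trans hfix.symm) ▸ ht)
  have hword : π (ρ.concat i) = π ω := by
    rw [wordProd_concat, ← hρω, cs.simple_mul_simple_cancel_right]
  have hcount : (ris (ρ.concat i)).count (s i) = 1 := by
    rw [rightInvSeq_concat, concat_eq_append, count_append, count_eq_zero.mpr hnot']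
    simp
  have hodd := cs.neg_one_pow_count_rightInvSeq_eq hword (s i)
  refine count_pos_iff.mp (Nat.pos_of_ne_zero fun h0 => ?_)
  rw [hcount, h0] at hodd
  exact absurd hodd (by decide)

theorem simple_mul_eq_mul_simple_of_length_lt {w : W} {i j : B} (hw : ℓ w < ℓ (w * s j))
    (h : ℓ (s i * w * s j) < ℓ (s i * w)) : s i * w = w * s j := by
  -- exchange in `i :: ω` with `ω` reduced; `s j` cannot come from `ω` since `w < w s j`
  obtain ⟨ω, hω, rfl⟩ := cs.exists_isReduced w
  rw [← wordProd_cons] at h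
  rcases mem_cons.mp (cs.simple_mem_rightInvSeq_of_length_mul_simple_lt h) with hj | hj
  · rw [hj]; group
  · have := (cs.isRightInversion_of_mem_rightInvSeq hω hj).2
    omega

theorem simple_mul_eq_mul_simple_of_length_eq {w : W} {i j : B} (h : ℓ (s i * w * s j) = ℓ w)
    (h' : ℓ (w * s j) = ℓ (s i * w)) : s i * w = w * s j := by
  rcases cs.length_simple_mul w i with hi | hi
  · exact cs.simple_mul_eq_mul_simple_of_length_lt (by omega) (by omega)
  · have key := cs.simple_mul_eq_mul_simple_of_length_lt (w := s i * w) (i := i) (j := j)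
      (by omega) (by rw [cs.simple_mul_simple_cancel_left]; omega)
    rw [cs.simple_mul_simple_cancel_left] at key
    conv_lhs => rw [key]
    simp [mul_assoc, cs.simple_mul_simple_cancel_left]

theorem rightDescent_induction {p : W → Prop} (one : p 1)
    (mul_simple : ∀ w i, ℓ (w * s i) < ℓ w → p (w * s i) → p w) (w : W) : p w := by
  induction hn : ℓ w using Nat.strong_induction_on generalizing w with
  | _ n ih =>
    rcases eq_or_ne w 1 with rfl | hw
    · exact one
    obtain ⟨i, hi⟩ := cs.exists_rightDescent_of_ne_one hw
    exact mul_simple w i hi (ih _ (hn ▸ hi) _ rfl)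

/-- The set `I_*` of twisted involutions. -/
abbrev TwistedInvolution (st : W ≃* W) : Type _ := {z : W // st z = z⁻¹}

section TwistedInvolution

variable (st : W ≃* W)

theorem length_map_le_of_map_simple (hS : ∀ i, ∃ j, st (s i) = s j) (w : W) :
    ℓ (st w) ≤ ℓ w := by
  choose f hf using hS
  obtain ⟨ω, hω, rfl⟩ := cs.exists_isReduced w
  have hmap : st (π ω) = π (ω.map f) := by
    simp only [wordProd, map_list_prod, map_map]
    exact congrArg List.prod (List.map_congr_left fun i _ => hf i)
  rw [hmap, hω.eq]
  simpa using cs.length_wordProd_le (ω.map f)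

theorem length_map_of_map_simple (hinv : ∀ w, st (st w) = w) (hS : ∀ i, ∃ j, st (s i) = s j)
    (w : W) : ℓ (st w) = ℓ w :=
  (cs.length_map_le_of_map_simple st hS w).antisymm <| by
    simpa [hinv] using cs.length_map_le_of_map_simple st hS (st w)

theorem length_mul_map_simple (hinv : ∀ w, st (st w) = w) (hS : ∀ i, ∃ j, st (s i) = s j)
    {z : W} (hz : st z = z⁻¹) (i : B) : ℓ (z * st (s i)) = ℓ (s i * z) := by
  rw [← cs.length_map_of_map_simple st hinv hS, map_mul, hz, hinv, ← cs.length_inv]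
  simp

theorem map_simple_mul_self (i : B) : st (s i) * st (s i) = 1 := by
  rw [← map_mul, cs.simple_mul_simple_self, map_one]

theorem simple_mul_mem_of_commute {z : W} (hz : st z = z⁻¹) {i : B}
    (hc : s i * z = z * st (s i)) : st (s i * z) = (s i * z)⁻¹ := by
  have : st (s i) = z⁻¹ * s i * z := by rw [mul_assoc, hc]; group
  rw [map_mul, hz, this, mul_inv_rev, inv_simple]
  group

theorem simple_mul_mul_map_mem (hinv : ∀ w, st (st w) = w) {z : W} (hz : st z = z⁻¹) (i : B) :
    st (s i * z * st (s i)) = (s i * z * st (s i))⁻¹ := by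
  rw [map_mul, map_mul, hz, hinv, mul_inv_rev, mul_inv_rev, inv_simple, ← map_inv, inv_simple,
    mul_assoc]

/-- Lusztig–Vogan's `s ⋉ z`. -/
noncomputable def ltimes (hinv : ∀ w, st (st w) = w) (i : B) (z : TwistedInvolution st) :
    TwistedInvolution st :=
  if h : s i * z.1 = z.1 * st (s i) then ⟨s i * z.1, cs.simple_mul_mem_of_commute st z.2 h⟩
  else ⟨s i * z.1 * st (s i), cs.simple_mul_mul_map_mem st hinv z.2 i⟩

theorem length_simple_mul_mul_map_ne (hinv : ∀ w, st (st w) = w)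
    (hS : ∀ i, ∃ j, st (s i) = s j) {z : W} (hz : st z = z⁻¹) {i : B}
    (h : s i * z ≠ z * st (s i)) : ℓ (s i * z * st (s i)) ≠ ℓ z := fun heq => h <| by
  have hlen := cs.length_mul_map_simple st hinv hS hz i
  obtain ⟨j, hj⟩ := hS i
  rw [hj] at heq hlen ⊢
  exact cs.simple_mul_eq_mul_simple_of_length_eq heq hlen

variable {st} (hinv : ∀ w, st (st w) = w) {i : B} {z : TwistedInvolution st}

theorem coe_ltimes_of_commute (h : s i * z.1 = z.1 * st (s i)) :
    (cs.ltimes st hinv i z).1 = s i * z.1 := by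
  simp [ltimes, h]

theorem coe_ltimes_of_not_commute (h : s i * z.1 ≠ z.1 * st (s i)) :
    (cs.ltimes st hinv i z).1 = s i * z.1 * st (s i) := by
  simp [ltimes, h]

theorem commute_ltimes_iff :
    s i * (cs.ltimes st hinv i z).1 = (cs.ltimes st hinv i z).1 * st (s i) ↔
      s i * z.1 = z.1 * st (s i) := by
  by_cases h : s i * z.1 = z.1 * st (s i)
  · refine iff_of_true ?_ h
    rw [coe_ltimes_of_commute cs hinv h, cs.simple_mul_simple_cancel_left, h, mul_assoc,
      map_simple_mul_self, mul_one]
  · refine iff_of_false ?_ h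
    rw [coe_ltimes_of_not_commute cs hinv h, mul_assoc (s i * z.1), map_simple_mul_self, mul_one,
      mul_assoc, cs.simple_mul_simple_cancel_left]
    exact fun h' => h h'.symm

theorem ltimes_involutive : Function.Involutive (cs.ltimes st hinv i) := fun z => by
  apply Subtype.ext
  by_cases h : s i * z.1 = z.1 * st (s i)
  · rw [coe_ltimes_of_commute cs hinv ((commute_ltimes_iff cs hinv).mpr h),
      coe_ltimes_of_commute cs hinv h, cs.simple_mul_simple_cancel_left]
  · rw [coe_ltimes_of_not_commute cs hinv (mt (commute_ltimes_iff cs hinv).mp h),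
      coe_ltimes_of_not_commute cs hinv h, ← mul_assoc, ← mul_assoc, cs.simple_mul_simple_self,
      one_mul, mul_assoc, map_simple_mul_self, mul_one]

theorem length_le_length_ltimes_add_two (hS : ∀ i, ∃ j, st (s i) = s j) :
    ℓ z.1 ≤ ℓ (cs.ltimes st hinv i z).1 + 2 := by
  have := cs.length_simple_mul z.1 i
  by_cases h : s i * z.1 = z.1 * st (s i)
  · rw [coe_ltimes_of_commute cs hinv h]
    omega
  · obtain ⟨j, hj⟩ := hS i
    rw [coe_ltimes_of_not_commute cs hinv h, hj]
    have := cs.length_mul_simple (s i * z.1) j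
    omega

theorem length_lt_length_simple_mul_ltimes_iff (hS : ∀ i, ∃ j, st (s i) = s j) :
    ℓ (cs.ltimes st hinv i z).1 < ℓ (s i * (cs.ltimes st hinv i z).1) ↔
      ℓ (s i * z.1) < ℓ z.1 := by
  have := cs.length_simple_mul z.1 i
  by_cases h : s i * z.1 = z.1 * st (s i)
  · rw [coe_ltimes_of_commute cs hinv h, cs.simple_mul_simple_cancel_left]
  · have hne := cs.length_simple_mul_mul_map_ne st hinv hS z.2 h
    have hlen := cs.length_mul_map_simple st hinv hS z.2 i
    rw [coe_ltimes_of_not_commute cs hinv h, ← mul_assoc, ← mul_assoc, cs.simple_mul_simple_self,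
      one_mul, hlen]
    obtain ⟨j, hj⟩ := hS i
    rw [hj] at hne ⊢
    have := cs.length_mul_simple (s i * z.1) j
    omega

end TwistedInvolution

end CoxeterSystem

theorem finsum_mul_add_mul_comp_of_involutive {α R : Type*} [Semiring R] {φ : α → α}
    (hφ : Function.Involutive φ) (a b g : α → R) (hg : g.HasFiniteSupport) :
    ∑ᶠ z, (a z * g z + b z * g (φ z)) = ∑ᶠ z, (a z + b (φ z)) * g z := by
  have hgφ : (g ∘ φ).HasFiniteSupport := hg.preimage hφ.injective.injOn
  have hb : (∑ᶠ z, b z * g (φ z)) = ∑ᶠ z, b (φ z) * g z := by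
    rw [← finsum_comp_equiv (hφ.toPerm φ)]
    simp [hφ _]
  rw [finsum_add_distrib (hg.subset (Function.support_mul_subset_right _ _))
      (hgφ.subset (Function.support_mul_subset_right _ _)), hb,
    ← finsum_add_distrib (hg.subset (Function.support_mul_subset_right _ _))
      (hg.subset (Function.support_mul_subset_right _ _))]
  simp only [add_mul]

namespace XRec

open CoxeterSystem

variable {B W : Type} [Group W] {M : CoxeterMatrix B} (cs : CoxeterSystem M W) {st : W ≃* W}

local prefix:100 "s" => cs.simple
local prefix:100 "ℓ" => cs.length

/-- The coefficient of `X^z_{ys}` in the recursion 1.2 for `X^z_y`. -/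
noncomputable def coeffSelf (i : B) (z : TwistedInvolution st) : ℤ[X] :=
  if s i * z.1 = z.1 * st (s i) then
    if ℓ z.1 < ℓ (s i * z.1) then X else X ^ 2 - X - 1
  else
    if ℓ z.1 < ℓ (s i * z.1) then 0 else X ^ 2 - 1

/-- The coefficient of `X^{s⋉z}_{ys}` in the recursion 1.2 for `X^z_y`. -/
noncomputable def coeffLtimes (i : B) (z : TwistedInvolution st) : ℤ[X] :=
  if s i * z.1 = z.1 * st (s i) then
    if ℓ z.1 < ℓ (s i * z.1) then X + 1 else X ^ 2 - X
  else
    if ℓ z.1 < ℓ (s i * z.1) then 1 else X ^ 2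

theorem coeffSelf_add_coeffLtimes_ltimes (hinv : ∀ w, st (st w) = w)
    (hS : ∀ i, ∃ j, st (s i) = s j) (i : B) (z : TwistedInvolution st) :
    coeffSelf cs i z + coeffLtimes cs i (cs.ltimes st hinv i z) = X ^ 2 := by
  have := cs.length_simple_mul_ne z.1 i
  unfold coeffSelf coeffLtimes
  simp only [commute_ltimes_iff cs hinv, length_lt_length_simple_mul_ltimes_iff cs hinv hS]
  split_ifs <;> first | omega | ring

variable {P : TwistedInvolution st → W → ℤ[X]}

theorem apply_eq_of_length_mul_simple_lt (hinv : ∀ w, st (st w) = w) (hP : XRec cs st P)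
    {y : W} {i : B} (hy : ℓ (y * s i) < ℓ y) (z : TwistedInvolution st) :
    P z y = coeffSelf cs i z * P z (y * s i) +
      coeffLtimes cs i z * P (cs.ltimes st hinv i z) (y * s i) := by
  obtain ⟨h₁, h₂, h₃, h₄⟩ := hP.2 i y hy z
  have := cs.length_simple_mul_ne z.1 i
  unfold coeffSelf coeffLtimes ltimes
  split_ifs with hc ha ha
  · exact h₁ hc ha _
  · exact h₂ hc (by omega) _
  · simpa using h₃ hc ha _
  · exact h₄ hc (by omega) _

theorem hasFiniteSupport (hinv : ∀ w, st (st w) = w) (hP : XRec cs st P) (y : W) :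
    (fun z => P z y).HasFiniteSupport := by
  induction y using cs.rightDescent_induction with
  | one =>
    refine (Set.finite_singleton (⟨1, by simp⟩ : TwistedInvolution st)).subset fun z hz => ?_
    rw [Function.mem_support, hP.1] at hz
    exact Subtype.ext (of_not_not fun h => hz (if_neg h))
  | mul_simple y i hi ih =>
    refine (ih.union (ih.preimage (ltimes_involutive cs hinv (i := i)).injective.injOn)).subset
      fun z hz => ?_
    by_contra! h
    simp only [Set.mem_union, Set.mem_preimage, Function.mem_support, not_or, not_not] at h
    simp [Function.mem_support, hP.apply_eq_of_length_mul_simple_lt cs hinv hi, h.1, h.2] at hz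

theorem apply_eq_zero_of_two_mul_length_lt (hinv : ∀ w, st (st w) = w)
    (hS : ∀ i, ∃ j, st (s i) = s j) (hP : XRec cs st P)
    (y : W) (z : TwistedInvolution st) (h : 2 * ℓ y < ℓ z.1) : P z y = 0 := by
  induction y using cs.rightDescent_induction generalizing z with
  | one =>
    rw [hP.1, if_neg]
    rintro hz
    simp [hz] at h
  | mul_simple y i hi ih =>
    have := cs.length_mul_simple y i
    have := length_le_length_ltimes_add_two cs hinv (i := i) (z := z) hS
    rw [hP.apply_eq_of_length_mul_simple_lt cs hinv hi, ih z (by omega), ih _ (by omega)]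
    simp

theorem finsum_eq_X_pow (hinv : ∀ w, st (st w) = w) (hS : ∀ i, ∃ j, st (s i) = s j)
    (hP : XRec cs st P) (y : W) : ∑ᶠ z, P z y = X ^ (2 * ℓ y) := by
  induction y using cs.rightDescent_induction with
  | one =>
    have hone : ∀ z : TwistedInvolution st, z ≠ ⟨1, by simp⟩ → P z 1 = 0 := fun z hz => by
      rw [hP.1, if_neg fun h => hz (Subtype.ext h)]
    rw [finsum_eq_single _ _ hone, hP.1, if_pos rfl, cs.length_one, mul_zero, pow_zero]
  | mul_simple y i hi ih =>
    have hlen : ℓ y = ℓ (y * s i) + 1 := by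
      have := cs.length_mul_simple y i
      omega
    calc ∑ᶠ z, P z y
        = ∑ᶠ z, (coeffSelf cs i z * P z (y * s i) +
            coeffLtimes cs i z * P (cs.ltimes st hinv i z) (y * s i)) :=
          finsum_congr (hP.apply_eq_of_length_mul_simple_lt cs hinv hi)
      _ = ∑ᶠ z, (coeffSelf cs i z + coeffLtimes cs i (cs.ltimes st hinv i z)) * P z (y * s i) :=
          finsum_mul_add_mul_comp_of_involutive (ltimes_involutive cs hinv) _ _ _
            (hP.hasFiniteSupport cs hinv _)
      _ = X ^ 2 * ∑ᶠ z, P z (y * s i) := by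
          simp only [coeffSelf_add_coeffLtimes_ltimes cs hinv hS]
          exact (mul_finsum _ _).symm
      _ = X ^ (2 * ℓ y) := by
          rw [ih, hlen, ← pow_add]
          ring_nf

end XRec

theorem statement7_general {B W : Type} [Group W] {M : CoxeterMatrix B}
    (cs : CoxeterSystem M W) (st : W ≃* W)
    (hst_inv : ∀ w, st (st w) = w)
    (hst_S : ∀ i : B, ∃ j : B, st (cs.simple i) = cs.simple j)
    (P : {z : W // st z = z⁻¹} → W → Polynomial ℤ) (hP : XRec cs st P) (y : W) :
    (∀ z : {z : W // st z = z⁻¹}, 2 * cs.length y < cs.length z.1 → P z y = 0) ∧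
    ∑ᶠ z : {z : W // st z = z⁻¹}, P z y = X ^ (2 * cs.length y) :=
  ⟨hP.apply_eq_zero_of_two_mul_length_lt cs hst_inv hst_S y, hP.finsum_eq_X_pow cs hst_inv hst_S y⟩

/-- **1.3(b).** For any `y ∈ W`, `Σ_{z ∈ I_*} X^z_y = u^{2 l(y)}`, the sum having
finitely many nonzero terms; indeed `X^z_y = 0` whenever `l(z) > 2 l(y)`. -/
theorem statement7 {B W : Type} [Group W] [Finite B] {M : CoxeterMatrix B}
    (cs : CoxeterSystem M W) (st : W ≃* W)
    (hst_inv : ∀ w, st (st w) = w)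
    (hst_S : ∀ i : B, ∃ j : B, st (cs.simple i) = cs.simple j)
    (P : {z : W // st z = z⁻¹} → W → Polynomial ℤ) (hP : XRec cs st P) (y : W) :
    (∀ z : {z : W // st z = z⁻¹}, 2 * cs.length y < cs.length z.1 → P z y = 0) ∧
    ∑ᶠ z : {z : W // st z = z⁻¹}, P z y = X ^ (2 * cs.length y) :=
  statement7_general cs st hst_inv hst_S P hP y
end

section
/- If (z,y) ∈ I_* × W and l(z) > 2l(y), then X^z_y = 0. -/
open Polynomial
open scoped Classical

/-- If `z ∈ I_*`, `y ∈ W` and `l(z) > 2 l(y)`, then `X^z_y = 0`. -/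
theorem statement8 {B W : Type} [Group W] [Finite B] {M : CoxeterMatrix B}
    (cs : CoxeterSystem M W) (st : W ≃* W)
    (hst_inv : ∀ w, st (st w) = w)
    (hst_S : ∀ i : B, ∃ j : B, st (cs.simple i) = cs.simple j)
    (P : {z : W // st z = z⁻¹} → W → Polynomial ℤ) (hP : XRec cs st P)
    (z : {z : W // st z = z⁻¹}) (y : W) (hzy : 2 * cs.length y < cs.length z.1) :
    P z y = 0 := by
  obtain ⟨h1, hrec⟩ := hP
  generalize hn : cs.length y = n
  induction n using Nat.strong_induction_on generalizing z y with
  | _ n ih =>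
  by_cases hy1 : y = 1
  · subst hy1
    rw [h1]
    have : z.1 ≠ 1 := by
      intro h
      rw [h] at hzy
      simp [cs.length_one] at hzy
    simp [this]
  · obtain ⟨i, hd⟩ := cs.exists_rightDescent_of_ne_one hy1
    have hd' : cs.length (y * cs.simple i) < cs.length y := hd
    have hly : cs.length (y * cs.simple i) + 1 = cs.length y :=
      (cs.length_mul_simple y i).resolve_left (by omega)
    obtain ⟨j, hj⟩ := hst_S i
    obtain ⟨c1, c2, c3, c4⟩ := hrec i y hd' z
    have hsinv : (cs.simple i)⁻¹ = cs.simple i := (cs.inv_simple i)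
    have hstsinv : (st (cs.simple i))⁻¹ = st (cs.simple i) := by rw [hj, cs.inv_simple]
    have hzinv : st z.1 = z.1⁻¹ := z.2
    by_cases hc : cs.simple i * z.1 = z.1 * st (cs.simple i)
    · have h' : st (cs.simple i * z.1) = (cs.simple i * z.1)⁻¹ := by
        have := congrArg (·⁻¹) hc
        simp only [mul_inv_rev, hsinv, hstsinv] at this
        rw [map_mul, hzinv, mul_inv_rev, hsinv, ← this]
      rcases cs.length_simple_mul z.1 i with hl | hl
      · -- l(sz) = l(z) + 1
        rw [c1 hc (by omega) h',
          ih (cs.length (y * cs.simple i)) (by omega) z _ (by omega) rfl,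
          ih (cs.length (y * cs.simple i)) (by omega) ⟨_, h'⟩ _ (by simp only; omega) rfl]
        ring
      · -- l(sz) + 1 = l(z)
        rw [c2 hc (by omega) h',
          ih (cs.length (y * cs.simple i)) (by omega) z _ (by omega) rfl,
          ih (cs.length (y * cs.simple i)) (by omega) ⟨_, h'⟩ _ (by simp only; omega) rfl]
        ring
    · have h'' : st (cs.simple i * z.1 * st (cs.simple i)) =
          (cs.simple i * z.1 * st (cs.simple i))⁻¹ := by
        rw [map_mul, map_mul, hzinv, hst_inv, mul_inv_rev, mul_inv_rev, hsinv, hstsinv, mul_assoc]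
      have hlen2 : cs.length (cs.simple i * z.1) ≤
          cs.length (cs.simple i * z.1 * st (cs.simple i)) + 1 := by
        rw [hj]
        rcases cs.length_mul_simple (cs.simple i * z.1) j with hl | hl <;> omega
      rcases cs.length_simple_mul z.1 i with hl | hl
      · -- l(sz) = l(z) + 1
        rw [c3 hc (by omega) h'',
          ih (cs.length (y * cs.simple i)) (by omega) ⟨_, h''⟩ _ (by simp only; omega) rfl]
      · -- l(sz) + 1 = l(z)
        rw [c4 hc (by omega) h'',
          ih (cs.length (y * cs.simple i)) (by omega) z _ (by omega) rfl,
          ih (cs.length (y * cs.simple i)) (by omega) ⟨_, h''⟩ _ (by simp only; omega) rfl]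
        ring
end
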